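/- arXiv:math/0505166 — 3 statements merged into one kernel-verified Lean document; each statement's English description precedes it below -/
import Mathlib

section
/- Let 𝒜 be a finite set of lines (one-dimensional affine subspaces) in ℝ², and let L be a line not belonging to 𝒜. Then the set L ∩ ⋃_{H ∈ 𝒜} H is finite, and the number of connected components of ℝ² \ ⋃_{H ∈ 𝒜 ∪ {L}} H equals the number of connected components of ℝ² \ ⋃_{H ∈ 𝒜} H plus 1 plus the cardinality of L ∩ ⋃_{H ∈ 𝒜} H. -/
/-- A line in `ℝ²`: a one-dimensional affine subspace. -/
def IsLine (L : Set (Fin 2 → ℝ)) : Prop :=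
  ∃ x v : Fin 2 → ℝ, v ≠ 0 ∧ L = {y | ∃ t : ℝ, y = x + t • v}

open Set


noncomputable section LineArr

/-- dot product on `ℝ²` -/
def dotL (n z : Fin 2 → ℝ) : ℝ := n 0 * z 0 + n 1 * z 1

lemma dotL_isLinear (n : Fin 2 → ℝ) : IsLinearMap ℝ (dotL n) := by
  constructor <;> intros <;> simp [dotL] <;> ring

lemma continuous_dotL (n : Fin 2 → ℝ) : Continuous (dotL n) := by
  unfold dotL; fun_prop

lemma dotL_add (n x y : Fin 2 → ℝ) : dotL n (x + y) = dotL n x + dotL n y :=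
  (dotL_isLinear n).map_add x y

lemma dotL_smul (n : Fin 2 → ℝ) (t : ℝ) (x : Fin 2 → ℝ) : dotL n (t • x) = t * dotL n x :=
  (dotL_isLinear n).map_smul t x

lemma dotL_self_pos {n : Fin 2 → ℝ} (hn : n ≠ 0) : 0 < dotL n n := by
  have h : n 0 ≠ 0 ∨ n 1 ≠ 0 := by
    by_contra h
    push_neg at h
    apply hn
    funext j
    fin_cases j <;> simp [h.1, h.2]
  have h0 : (0:ℝ) ≤ n 0 * n 0 := mul_self_nonneg _
  have h1 : (0:ℝ) ≤ n 1 * n 1 := mul_self_nonneg _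
  rcases h with h | h
  · have : 0 < n 0 * n 0 := by positivity
    unfold dotL; linarith
  · have : 0 < n 1 * n 1 := by positivity
    unfold dotL; linarith

/-- Every line is the zero set of an affine functional with nonzero linear part. -/
lemma line_repr {L : Set (Fin 2 → ℝ)} (hL : IsLine L) :
    ∃ n : Fin 2 → ℝ, ∃ c : ℝ, n ≠ 0 ∧ ∀ z, z ∈ L ↔ dotL n z = c := by
  obtain ⟨x, v, hv, rfl⟩ := hL
  refine ⟨![-(v 1), v 0], dotL ![-(v 1), v 0] x, ?_, ?_⟩
  · intro h
    apply hv
    have h0 : -(v 1) = 0 := by simpa using congrFun h 0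
    have h1 : v 0 = 0 := by simpa using congrFun h 1
    funext j; fin_cases j <;> simp [h1] <;> linarith
  · intro z
    constructor
    · rintro ⟨t, rfl⟩
      rw [dotL_add, dotL_smul]
      have : dotL ![-(v 1), v 0] v = 0 := by simp [dotL]; ring
      rw [this]; ring
    · intro hz
      have hw : -(v 1) * (z 0 - x 0) + v 0 * (z 1 - x 1) = 0 := by
        simp only [dotL, Matrix.cons_val_zero, Matrix.cons_val_one, Matrix.head_cons] at hz ⊢
        linarith
      have h01 : v 0 ≠ 0 ∨ v 1 ≠ 0 := by
        by_contra h
        push_neg at h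
        exact hv (funext fun j => by fin_cases j <;> simp [h.1, h.2])
      rcases h01 with h | h
      · refine ⟨(z 0 - x 0) / v 0, funext fun j => ?_⟩
        fin_cases j <;>
          simp only [Pi.add_apply, Pi.smul_apply, smul_eq_mul]
        · simp only [Fin.zero_eta, Fin.mk_one, Fin.isValue] at *
          field_simp
          ring
        · simp only [Fin.zero_eta, Fin.mk_one, Fin.isValue] at *
          field_simp
          nlinarith [hw]
      · refine ⟨(z 1 - x 1) / v 1, funext fun j => ?_⟩
        fin_cases j <;>
          simp only [Pi.add_apply, Pi.smul_apply, smul_eq_mul]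
        · simp only [Fin.zero_eta, Fin.mk_one, Fin.isValue] at *
          field_simp
          nlinarith [hw]
        · simp only [Fin.zero_eta, Fin.mk_one, Fin.isValue] at *
          field_simp
          ring

/-- A line contained in a line is equal to it. -/
lemma line_subset_eq {L H : Set (Fin 2 → ℝ)} (hL : IsLine L) (hH : IsLine H)
    (hsub : L ⊆ H) : L = H := by
  obtain ⟨x, v, hv, rfl⟩ := hL
  obtain ⟨x', u, hu, rfl⟩ := hH
  obtain ⟨t0, h0⟩ := hsub (show x ∈ _ from ⟨0, by simp⟩)
  obtain ⟨t1, h1⟩ := hsub (show x + v ∈ _ from ⟨1, by simp⟩)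
  have hvu : v = (t1 - t0) • u := by
    have hv' : v = (x' + t1 • u) - (x' + t0 • u) := by
      rw [← h0, ← h1]; abel
    rw [hv', sub_smul]; abel
  have hne : t1 - t0 ≠ 0 := fun h => hv (by rw [hvu, h, zero_smul])
  apply Set.Subset.antisymm hsub
  rintro y ⟨s, rfl⟩
  refine ⟨(s - t0) / (t1 - t0), ?_⟩
  rw [h0, hvu, smul_smul, div_mul_cancel₀ _ hne]
  module


section Sign

set_option linter.unusedSectionVars false

variable {ι : Type} [Fintype ι]


def SA (n : ι → Fin 2 → ℝ) (c : ι → ℝ) : Set (Fin 2 → ℝ) := {z | ∀ i, dotL (n i) z - c i ≠ 0}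

def sgnA (n : ι → Fin 2 → ℝ) (c : ι → ℝ) (z : Fin 2 → ℝ) : ι → Bool :=
  fun i => decide (0 < dotL (n i) z - c i)

def cellA (n : ι → Fin 2 → ℝ) (c : ι → ℝ) (σ : ι → Bool) : Set (Fin 2 → ℝ) :=
  ⋂ i, {z | if σ i then 0 < dotL (n i) z - c i else dotL (n i) z - c i < 0}

def AchA (n : ι → Fin 2 → ℝ) (c : ι → ℝ) : Set (ι → Bool) :=
  {σ | ∃ z, z ∈ SA n c ∧ sgnA n c z = σ}

variable {n : ι → Fin 2 → ℝ} {c : ι → ℝ}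

lemma cellA_subset (σ : ι → Bool) : cellA n c σ ⊆ SA n c := by
  intro z hz i
  have hi := mem_iInter.1 hz i
  simp only [mem_setOf_eq] at hi
  intro h0
  by_cases h : σ i = true
  · rw [if_pos h] at hi; linarith
  · rw [if_neg h] at hi; linarith

lemma mem_cellA_iff {z : Fin 2 → ℝ} (hz : z ∈ SA n c) (σ : ι → Bool) :
    z ∈ cellA n c σ ↔ sgnA n c z = σ := by
  constructor
  · intro h
    funext i
    have hi := mem_iInter.1 h i
    simp only [mem_setOf_eq] at hi
    by_cases hb : σ i = true
    · rw [if_pos hb] at hi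
      rw [hb]
      exact decide_eq_true hi
    · rw [if_neg hb] at hi
      rw [Bool.not_eq_true] at hb
      rw [hb]
      exact decide_eq_false (by linarith)
  · rintro rfl
    apply mem_iInter.2
    intro i
    simp only [mem_setOf_eq]
    by_cases h : 0 < dotL (n i) z - c i
    · rw [if_pos (show sgnA n c z i = true from decide_eq_true h)]
      exact h
    · rw [if_neg (show ¬ sgnA n c z i = true by simp [sgnA, h])]
      exact lt_of_le_of_ne (not_lt.1 h) (hz i)

lemma cellA_convex (σ : ι → Bool) : Convex ℝ (cellA n c σ) := by
  apply convex_iInter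
  intro i
  by_cases h : σ i = true
  · have he : {z : Fin 2 → ℝ | if σ i = true then 0 < dotL (n i) z - c i else dotL (n i) z - c i < 0}
        = {z | c i < dotL (n i) z} := by
      ext z; rw [mem_setOf_eq, if_pos h, mem_setOf_eq, sub_pos]
    rw [he]
    exact convex_halfSpace_gt (dotL_isLinear (n i)) (c i)
  · have he : {z : Fin 2 → ℝ | if σ i = true then 0 < dotL (n i) z - c i else dotL (n i) z - c i < 0}
        = {z | dotL (n i) z < c i} := by
      ext z; rw [mem_setOf_eq, if_neg h, mem_setOf_eq, sub_neg]
    rw [he]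
    exact convex_halfSpace_lt (dotL_isLinear (n i)) (c i)

lemma cellA_open (σ : ι → Bool) : IsOpen (cellA n c σ) := by
  apply isOpen_iInter_of_finite
  intro i
  by_cases h : σ i = true
  · have he : {z : Fin 2 → ℝ | if σ i = true then 0 < dotL (n i) z - c i else dotL (n i) z - c i < 0}
        = {z | c i < dotL (n i) z} := by
      ext z; rw [mem_setOf_eq, if_pos h, mem_setOf_eq, sub_pos]
    rw [he]
    exact isOpen_lt continuous_const (continuous_dotL (n i))
  · have he : {z : Fin 2 → ℝ | if σ i = true then 0 < dotL (n i) z - c i else dotL (n i) z - c i < 0}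
        = {z | dotL (n i) z < c i} := by
      ext z; rw [mem_setOf_eq, if_neg h, mem_setOf_eq, sub_neg]
    rw [he]
    exact isOpen_lt (continuous_dotL (n i)) continuous_const

/-- same component implies same sign vector -/
lemma sgn_eq_of_component_eq (z w : SA n c)
    (h : connectedComponent z = connectedComponent w) : sgnA n c z.1 = sgnA n c w.1 := by
  funext i
  have hz := z.2 i
  have hw := w.2 i
  set F : SA n c → ℝ := fun u => dotL (n i) u.1 - c i with hF
  have hFc : Continuous F := ((continuous_dotL (n i)).comp continuous_subtype_val).sub continuous_const
  have hzc : (z : SA n c) ∈ connectedComponent z := mem_connectedComponent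
  have hwc : (w : SA n c) ∈ connectedComponent z := h ▸ mem_connectedComponent
  have hpc : IsPreconnected (connectedComponent z) := isPreconnected_connectedComponent
  have key : (0 < F z) ↔ (0 < F w) := by
    constructor
    · intro hpos
      by_contra hneg
      have hneg' : F w < 0 := (w.2 i).lt_or_gt.resolve_right hneg
      have := hpc.intermediate_value hwc hzc hFc.continuousOn
        (Set.mem_Icc.2 ⟨le_of_lt hneg', le_of_lt hpos⟩)
      obtain ⟨u, _, hu⟩ := this
      exact u.2 i hu
    · intro hpos
      by_contra hneg
      have hneg' : F z < 0 := (z.2 i).lt_or_gt.resolve_right hneg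
      have := hpc.intermediate_value hzc hwc hFc.continuousOn
        (Set.mem_Icc.2 ⟨le_of_lt hneg', le_of_lt hpos⟩)
      obtain ⟨u, _, hu⟩ := this
      exact u.2 i hu
  simp only [sgnA]
  exact decide_eq_decide.mpr key

/-- same sign vector implies same component -/
lemma component_eq_of_sgn_eq (z w : SA n c) (h : sgnA n c z.1 = sgnA n c w.1) :
    connectedComponent z = connectedComponent w := by
  set σ := sgnA n c z.1
  have hzc : z.1 ∈ cellA n c σ := (mem_cellA_iff z.2 σ).2 rfl
  have hwc : w.1 ∈ cellA n c σ := (mem_cellA_iff w.2 σ).2 h.symm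
  set cell' : Set (SA n c) := Subtype.val ⁻¹' cellA n c σ with hcell'
  have himg : Subtype.val '' cell' = cellA n c σ := by
    apply Set.Subset.antisymm
    · rintro y ⟨u, hu, rfl⟩; exact hu
    · intro y hy
      exact ⟨⟨y, cellA_subset σ hy⟩, hy, rfl⟩
  have hpre : IsPreconnected cell' := by
    rw [← Topology.IsInducing.subtypeVal.isPreconnected_image, himg]
    exact (cellA_convex σ).isPreconnected
  have hsub : cell' ⊆ connectedComponent z := hpre.subset_connectedComponent hzc
  have := connectedComponent_eq (hsub hwc)
  first
    | exact this
    | exact this.symm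


lemma card_components_eq (n : ι → Fin 2 → ℝ) (c : ι → ℝ) :
    Nat.card (ConnectedComponents (SA n c)) = (AchA n c).ncard := by
  have hlift : ∀ (a b : SA n c), (connectedComponentSetoid (SA n c)).r a b →
      sgnA n c a.1 = sgnA n c b.1 := fun a b hab => sgn_eq_of_component_eq a b hab
  set g : ConnectedComponents (SA n c) → (ι → Bool) :=
    Quotient.lift (fun z : SA n c => sgnA n c z.1) hlift with hg
  have hginj : Function.Injective g := by
    intro q q'
    induction q using Quotient.inductionOn with | h z =>
    induction q' using Quotient.inductionOn with | h w =>
    intro h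
    exact Quotient.sound (component_eq_of_sgn_eq z w h)
  have h1 : Nat.card (ConnectedComponents (SA n c)) = Nat.card (Set.range g) :=
    (Nat.card_range_of_injective hginj).symm
  rw [h1, Nat.card_coe_set_eq]
  congr 1
  ext σ
  constructor
  · rintro ⟨q, rfl⟩
    induction q using Quotient.inductionOn with | h z =>
    exact ⟨z.1, z.2, rfl⟩
  · rintro ⟨z, hz, rfl⟩
    exact ⟨Quotient.mk _ ⟨z, hz⟩, rfl⟩


end Sign

section Three

open Set

variable {ι : Type} [Fintype ι]

lemma perturb {U : Set (Fin 2 → ℝ)} (hU : IsOpen U) {z : Fin 2 → ℝ} (hz : z ∈ U)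
    {nL : Fin 2 → ℝ} {cL : ℝ} (hnL : nL ≠ 0) (hz0 : dotL nL z - cL = 0) :
    (∃ z' ∈ U, 0 < dotL nL z' - cL) ∧ (∃ z' ∈ U, dotL nL z' - cL < 0) := by
  have hF : Continuous (fun δ : ℝ => z + δ • nL) := by fun_prop
  have hpre : IsOpen ((fun δ : ℝ => z + δ • nL) ⁻¹' U) := hU.preimage hF
  have h0 : (0:ℝ) ∈ (fun δ : ℝ => z + δ • nL) ⁻¹' U := by simp [hz]
  obtain ⟨ε, hε, hball⟩ := Metric.isOpen_iff.1 hpre 0 h0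
  have hval : ∀ δ : ℝ, dotL nL (z + δ • nL) - cL = δ * dotL nL nL := by
    intro δ
    rw [dotL_add, dotL_smul]
    linarith
  have hpos := dotL_self_pos hnL
  constructor
  · refine ⟨z + (ε/2) • nL, hball ?_, ?_⟩
    · simp only [Metric.mem_ball, dist_zero_right, Real.norm_eq_abs]
      rw [abs_of_pos (by linarith)]
      linarith
    · rw [hval]; positivity
  · refine ⟨z + (-(ε/2)) • nL, hball ?_, ?_⟩
    · simp only [Metric.mem_ball, dist_zero_right, Real.norm_eq_abs]
      rw [abs_of_neg (by linarith)]
      linarith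
    · rw [hval]
      have : 0 < (ε/2) * dotL nL nL := by positivity
      linarith

lemma cell_meets {n : ι → Fin 2 → ℝ} {c : ι → ℝ} {nL : Fin 2 → ℝ} {cL : ℝ} {σ : ι → Bool}
    {z w : Fin 2 → ℝ} (hz : z ∈ cellA n c σ) (hw : w ∈ cellA n c σ)
    (hzneg : dotL nL z - cL < 0) (hwpos : 0 < dotL nL w - cL) :
    ∃ p ∈ cellA n c σ, dotL nL p - cL = 0 := by
  set g : ℝ → ℝ := fun t => dotL nL ((1 - t) • z + t • w) - cL with hg
  have hgc : Continuous g := by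
    apply Continuous.sub _ continuous_const
    exact (continuous_dotL nL).comp (by fun_prop)
  have hg0 : g 0 = dotL nL z - cL := by simp [hg]
  have hg1 : g 1 = dotL nL w - cL := by simp [hg]
  have h01 : (0:ℝ) ∈ Icc (g 0) (g 1) := by
    rw [hg0, hg1]; exact ⟨le_of_lt hzneg, le_of_lt hwpos⟩
  obtain ⟨t, ht, hgt⟩ := intermediate_value_Icc (by norm_num : (0:ℝ) ≤ 1) hgc.continuousOn h01
  refine ⟨(1 - t) • z + t • w, ?_, hgt⟩
  exact (cellA_convex σ) hz hw (by linarith [ht.2]) ht.1 (by ring)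

lemma AchA_option_ncard (n : ι → Fin 2 → ℝ) (c : ι → ℝ) (nL : Fin 2 → ℝ) (cL : ℝ)
    (hnL : nL ≠ 0) :
    (AchA (fun o : Option ι => o.elim nL n) (fun o : Option ι => o.elim cL c)).ncard
      = (AchA n c).ncard
        + {σ ∈ AchA n c | ∃ p ∈ cellA n c σ, dotL nL p - cL = 0}.ncard := by
  classical
  set n' : Option ι → Fin 2 → ℝ := fun o => o.elim nL n with hn'
  set c' : Option ι → ℝ := fun o => o.elim cL c with hc'
  set r : (Option ι → Bool) → (ι → Bool) := fun σ' i => σ' (some i) with hr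
  set Ap : Set (ι → Bool) := {σ | ∃ z, z ∈ SA n c ∧ sgnA n c z = σ ∧ 0 < dotL nL z - cL} with hAp
  set Am : Set (ι → Bool) := {σ | ∃ z, z ∈ SA n c ∧ sgnA n c z = σ ∧ dotL nL z - cL < 0} with hAm
  set A'p : Set (Option ι → Bool) := {σ' | σ' ∈ AchA n' c' ∧ σ' none = true} with hA'p
  set A'm : Set (Option ι → Bool) := {σ' | σ' ∈ AchA n' c' ∧ σ' none = false} with hA'm
  -- membership translation
  have hSA' : ∀ z, z ∈ SA n' c' ↔ (z ∈ SA n c ∧ dotL nL z - cL ≠ 0) := by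
    intro z
    constructor
    · intro h
      exact ⟨fun i => h (some i), h none⟩
    · rintro ⟨h1, h2⟩ o
      cases o with
      | none => exact h2
      | some i => exact h1 i
  have hsgn' : ∀ z, r (sgnA n' c' z) = sgnA n c z := fun z => rfl
  have hsgn'none : ∀ z, sgnA n' c' z none = decide (0 < dotL nL z - cL) := fun z => rfl
  -- split A'
  have hsplit : AchA n' c' = A'p ∪ A'm := by
    ext σ'
    constructor
    · intro h
      rcases Bool.dichotomy (σ' none) with hb | hb
      · exact Or.inr ⟨h, hb⟩
      · exact Or.inl ⟨h, hb⟩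
    · rintro (⟨h, _⟩ | ⟨h, _⟩) <;> exact h
  have hdisj : Disjoint A'p A'm := by
    rw [Set.disjoint_left]
    rintro σ' ⟨_, h1⟩ ⟨_, h2⟩
    rw [h1] at h2
    simp at h2
  -- images
  have himgp : r '' A'p = Ap := by
    ext σ
    constructor
    · rintro ⟨σ', ⟨⟨z, hz, rfl⟩, hnone⟩, rfl⟩
      refine ⟨z, ((hSA' z).1 hz).1, (hsgn' z), ?_⟩
      rw [hsgn'none z] at hnone
      exact of_decide_eq_true hnone
    · rintro ⟨z, hz, rfl, hpos⟩
      refine ⟨sgnA n' c' z, ⟨⟨z, (hSA' z).2 ⟨hz, ne_of_gt hpos⟩, rfl⟩, ?_⟩, hsgn' z⟩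
      rw [hsgn'none z]
      exact decide_eq_true hpos
  have himgm : r '' A'm = Am := by
    ext σ
    constructor
    · rintro ⟨σ', ⟨⟨z, hz, rfl⟩, hnone⟩, rfl⟩
      refine ⟨z, ((hSA' z).1 hz).1, (hsgn' z), ?_⟩
      rw [hsgn'none z] at hnone
      have := of_decide_eq_false hnone
      exact lt_of_le_of_ne (not_lt.1 this) (((hSA' z).1 hz).2)
    · rintro ⟨z, hz, rfl, hneg⟩
      refine ⟨sgnA n' c' z, ⟨⟨z, (hSA' z).2 ⟨hz, ne_of_lt hneg⟩, rfl⟩, ?_⟩, hsgn' z⟩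
      rw [hsgn'none z]
      exact decide_eq_false (by linarith)
  -- injectivity on parts
  have hinj : ∀ (b : Bool), Set.InjOn r {σ' | σ' ∈ AchA n' c' ∧ σ' none = b} := by
    intro b σ'1 h1 σ'2 h2 heq
    funext o
    cases o with
    | none => rw [h1.2, h2.2]
    | some i => exact congrFun heq i
  -- union and intersection of images
  have hunion : Ap ∪ Am = AchA n c := by
    ext σ
    constructor
    · rintro (⟨z, hz, rfl, _⟩ | ⟨z, hz, rfl, _⟩) <;> exact ⟨z, hz, rfl⟩
    · rintro ⟨z, hz, rfl⟩
      rcases eq_or_ne (dotL nL z - cL) 0 with h0 | h0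
      · have hzc : z ∈ cellA n c (sgnA n c z) := (mem_cellA_iff hz _).2 rfl
        obtain ⟨⟨z', hz', hz'pos⟩, _⟩ := perturb (cellA_open _) hzc hnL h0
        have hz'S : z' ∈ SA n c := cellA_subset _ hz'
        exact Or.inl ⟨z', hz'S, ((mem_cellA_iff hz'S _).1 hz'), hz'pos⟩
      · rcases h0.lt_or_gt with h | h
        · exact Or.inr ⟨z, hz, rfl, h⟩
        · exact Or.inl ⟨z, hz, rfl, h⟩
  have hinter : Ap ∩ Am = {σ ∈ AchA n c | ∃ p ∈ cellA n c σ, dotL nL p - cL = 0} := by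
    ext σ
    constructor
    · rintro ⟨⟨z, hz, rfl, hzpos⟩, ⟨w, hw, hsw, hwneg⟩⟩
      have hzc : z ∈ cellA n c (sgnA n c z) := (mem_cellA_iff hz _).2 rfl
      have hwc : w ∈ cellA n c (sgnA n c z) := (mem_cellA_iff hw _).2 hsw
      obtain ⟨p, hp, hp0⟩ := cell_meets hwc hzc hwneg hzpos
      exact ⟨⟨z, hz, rfl⟩, p, hp, hp0⟩
    · rintro ⟨⟨z, hz, rfl⟩, p, hp, hp0⟩
      obtain ⟨⟨zp, hzp, hzppos⟩, ⟨zm, hzm, hzmneg⟩⟩ := perturb (cellA_open _) hp hnL hp0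
      have h1 : zp ∈ SA n c := cellA_subset _ hzp
      have h2 : zm ∈ SA n c := cellA_subset _ hzm
      exact ⟨⟨zp, h1, (mem_cellA_iff h1 _).1 hzp, hzppos⟩,
        ⟨zm, h2, (mem_cellA_iff h2 _).1 hzm, hzmneg⟩⟩
  -- counting
  have hfinAp : Ap.Finite := Set.toFinite _
  have hfinAm : Am.Finite := Set.toFinite _
  rw [hsplit, Set.ncard_union_eq hdisj (Set.toFinite _) (Set.toFinite _)]
  have e1 : A'p.ncard = Ap.ncard := by rw [← himgp]; exact (Set.ncard_image_of_injOn (hinj true)).symm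
  have e2 : A'm.ncard = Am.ncard := by rw [← himgm]; exact (Set.ncard_image_of_injOn (hinj false)).symm
  rw [e1, e2, ← hinter, ← hunion]
  have := Set.ncard_union_add_ncard_inter Ap Am hfinAp hfinAm
  omega

end Three

section OneD

open Set

/-- Generic: two maps with the same fibers on `s` have equinumerous images. -/
lemma ncard_image_eq_of_fiber_iff {α β γ : Type*} (s : Set α) (f : α → β) (g : α → γ)
    (h : ∀ a ∈ s, ∀ b ∈ s, (f a = f b ↔ g a = g b)) : (f '' s).ncard = (g '' s).ncard := by
  classical
  rcases Set.eq_empty_or_nonempty s with rfl | ⟨a0, ha0⟩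
  · simp
  have hF : ∀ y : β, ∃ c : γ, ∀ a ∈ s, f a = y → g a = c := by
    intro y
    by_cases hy : ∃ a ∈ s, f a = y
    · obtain ⟨a, ha, hay⟩ := hy
      exact ⟨g a, fun b hb hby => ((h b hb a ha).1 (hby.trans hay.symm))⟩
    · exact ⟨g a0, fun b hb hby => absurd ⟨b, hb, hby⟩ hy⟩
  choose F hF using hF
  have hgF : ∀ a ∈ s, F (f a) = g a := fun a ha => (hF (f a) a ha rfl).symm
  have himg : g '' s = F '' (f '' s) := by
    ext y
    constructor
    · rintro ⟨a, ha, rfl⟩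
      exact ⟨f a, ⟨a, ha, rfl⟩, hgF a ha⟩
    · rintro ⟨_, ⟨a, ha, rfl⟩, rfl⟩
      exact ⟨a, ha, (hgF a ha).symm⟩
  have hinj : Set.InjOn F (f '' s) := by
    rintro _ ⟨a, ha, rfl⟩ _ ⟨b, hb, rfl⟩ heq
    rw [hgF a ha, hgF b hb] at heq
    exact (h a ha b hb).2 heq
  rw [himg, Set.ncard_image_of_injOn hinj]

variable {ι : Type} [Fintype ι]

lemma oneD_count (a b : ι → ℝ) (hab : ∀ i, a i ≠ 0 ∨ b i ≠ 0) :
    {t : ℝ | ∃ i, a i * t + b i = 0}.Finite ∧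
    {σ : ι → Bool | ∃ t : ℝ, (∀ i, a i * t + b i ≠ 0) ∧
        (fun i => decide (0 < a i * t + b i)) = σ}.ncard
      = {t : ℝ | ∃ i, a i * t + b i = 0}.ncard + 1 := by
  classical
  set T : Set ℝ := {t : ℝ | ∃ i, a i * t + b i = 0} with hT
  have hTfin : T.Finite := by
    have hsub : T ⊆ ⋃ i, {t : ℝ | a i * t + b i = 0} := by
      rintro t ⟨i, hi⟩; exact Set.mem_iUnion.2 ⟨i, hi⟩
    refine Set.Finite.subset (Set.finite_iUnion fun i => ?_) hsub
    apply Set.Subsingleton.finite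
    intro t ht t' ht'
    simp only [mem_setOf_eq] at ht ht'
    rcases hab i with hai | hbi
    · have : a i * (t - t') = 0 := by linarith
      rcases mul_eq_zero.1 this with h | h
      · exact absurd h hai
      · linarith
    · rcases eq_or_ne (a i) 0 with h | h
      · rw [h] at ht; simp at ht; exact absurd ht hbi
      · have : a i * (t - t') = 0 := by linarith
        rcases mul_eq_zero.1 this with h' | h'
        · exact absurd h' h
        · linarith
  refine ⟨hTfin, ?_⟩
  set TF : Finset ℝ := hTfin.toFinset with hTF
  have hmemTF : ∀ r : ℝ, r ∈ TF ↔ r ∈ T := fun r => Set.Finite.mem_toFinset hTfin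
  set D : Set ℝ := {t : ℝ | ∀ i, a i * t + b i ≠ 0} with hD
  have hDT : ∀ t, t ∈ D ↔ t ∉ T := by
    intro t
    simp only [hD, hT, mem_setOf_eq, not_exists]
  set sgn1 : ℝ → (ι → Bool) := fun t i => decide (0 < a i * t + b i) with hsgn1
  set ν : ℝ → WithTop ℝ := fun t => (TF.filter (fun r => t < r)).min with hν
  -- achievable set is the image of D
  have hach : {σ : ι → Bool | ∃ t : ℝ, (∀ i, a i * t + b i ≠ 0) ∧
      (fun i => decide (0 < a i * t + b i)) = σ} = sgn1 '' D := by
    ext σ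
    constructor
    · rintro ⟨t, ht, rfl⟩; exact ⟨t, ht, rfl⟩
    · rintro ⟨t, ht, rfl⟩; exact ⟨t, ht, rfl⟩
  -- no root strictly between two points with equal signs
  have key : ∀ t ∈ D, ∀ t' ∈ D,
      (sgn1 t = sgn1 t' ↔ ∀ r ∈ T, ¬((t < r ∧ r < t') ∨ (t' < r ∧ r < t))) := by
    intro t ht t' ht'
    constructor
    · intro hs r hr hbtw
      obtain ⟨i, hroot⟩ := hr
      have hai : a i ≠ 0 := by
        intro h0
        rw [h0] at hroot
        simp at hroot
        exact (hab i).resolve_left (fun hh => hh h0) hroot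
      have hiff : (0 < a i * t + b i) ↔ (0 < a i * t' + b i) :=
        decide_eq_decide.1 (congrFun hs i)
      have hgt : a i * t + b i = a i * (t - r) := by linear_combination hroot
      have hgt' : a i * t' + b i = a i * (t' - r) := by linear_combination hroot
      rw [hgt, hgt'] at hiff
      rcases hbtw with ⟨h1, h2⟩ | ⟨h1, h2⟩
      · rcases hai.lt_or_gt with hlt | hlt
        · have p1 : 0 < a i * (t - r) := mul_pos_of_neg_of_neg hlt (by linarith)
          have p2 : a i * (t' - r) < 0 := mul_neg_of_neg_of_pos hlt (by linarith)
          have := hiff.1 p1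
          linarith
        · have p1 : a i * (t - r) < 0 := mul_neg_of_pos_of_neg hlt (by linarith)
          have p2 : 0 < a i * (t' - r) := mul_pos hlt (by linarith)
          have := hiff.2 p2
          linarith
      · rcases hai.lt_or_gt with hlt | hlt
        · have p1 : a i * (t - r) < 0 := mul_neg_of_neg_of_pos hlt (by linarith)
          have p2 : 0 < a i * (t' - r) := mul_pos_of_neg_of_neg hlt (by linarith)
          have := hiff.2 p2
          linarith
        · have p1 : 0 < a i * (t - r) := mul_pos hlt (by linarith)
          have p2 : a i * (t' - r) < 0 := mul_neg_of_pos_of_neg hlt (by linarith)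
          have := hiff.1 p1
          linarith
    · intro hnb
      funext i
      apply decide_eq_decide.2
      rcases eq_or_ne (a i) 0 with hai | hai
      · have heq : a i * t + b i = a i * t' + b i := by rw [hai]; ring
        rw [heq]
      · set r : ℝ := -(b i) / a i with hrdef
        have hroot : a i * r + b i = 0 := by rw [hrdef]; field_simp; ring
        have hrT : r ∈ T := ⟨i, hroot⟩
        have htr : t ≠ r := by
          intro h; exact ht i (by rw [h]; exact hroot)
        have ht'r : t' ≠ r := by
          intro h; exact ht' i (by rw [h]; exact hroot)
        have hside : (t < r ∧ t' < r) ∨ (r < t ∧ r < t') := by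
          rcases lt_or_gt_of_ne htr with h1 | h1 <;> rcases lt_or_gt_of_ne ht'r with h2 | h2
          · exact Or.inl ⟨h1, h2⟩
          · exact absurd (Or.inl ⟨h1, h2⟩) (hnb r hrT)
          · exact absurd (Or.inr ⟨h2, h1⟩) (hnb r hrT)
          · exact Or.inr ⟨h1, h2⟩
        have hgt : a i * t + b i = a i * (t - r) := by linear_combination hroot
        have hgt' : a i * t' + b i = a i * (t' - r) := by linear_combination hroot
        rw [hgt, hgt']
        rcases hside with ⟨h1, h2⟩ | ⟨h1, h2⟩
        · rcases hai.lt_or_gt with hlt | hlt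
          · exact iff_of_true (mul_pos_of_neg_of_neg hlt (by linarith))
              (mul_pos_of_neg_of_neg hlt (by linarith))
          · exact iff_of_false (not_lt.2 (mul_neg_of_pos_of_neg hlt (by linarith)).le)
              (not_lt.2 (mul_neg_of_pos_of_neg hlt (by linarith)).le)
        · rcases hai.lt_or_gt with hlt | hlt
          · exact iff_of_false (not_lt.2 (mul_neg_of_neg_of_pos hlt (by linarith)).le)
              (not_lt.2 (mul_neg_of_neg_of_pos hlt (by linarith)).le)
          · exact iff_of_true (mul_pos hlt (by linarith)) (mul_pos hlt (by linarith))
  -- equal signs iff equal ν on D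
  have hfib : ∀ t ∈ D, ∀ t' ∈ D, (sgn1 t = sgn1 t' ↔ ν t = ν t') := by
    intro t ht t' ht'
    constructor
    · intro hs
      have hnb := (key t ht t' ht').1 hs
      have hfeq : TF.filter (fun r => t < r) = TF.filter (fun r => t' < r) := by
        apply Finset.ext
        intro r
        simp only [Finset.mem_filter, hmemTF]
        constructor
        · rintro ⟨hrT, hlt⟩
          refine ⟨hrT, ?_⟩
          by_contra hle
          push_neg at hle
          have : r ≠ t' := fun h => ((hDT t').1 ht') (h ▸ hrT)
          exact (hnb r hrT) (Or.inl ⟨hlt, lt_of_le_of_ne hle this⟩)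
        · rintro ⟨hrT, hlt⟩
          refine ⟨hrT, ?_⟩
          by_contra hle
          push_neg at hle
          have : r ≠ t := fun h => ((hDT t).1 ht) (h ▸ hrT)
          exact (hnb r hrT) (Or.inr ⟨hlt, lt_of_le_of_ne hle this⟩)
      simp only [hν, hfeq]
    · intro hveq
      apply (key t ht t' ht').2
      intro r hrT hbtw
      have hrTF : r ∈ TF := (hmemTF r).2 hrT
      rcases hbtw with ⟨h1, h2⟩ | ⟨h1, h2⟩
      · -- t < r < t'
        have hmem : r ∈ TF.filter (fun s => t < s) := Finset.mem_filter.2 ⟨hrTF, h1⟩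
        have hle : ν t ≤ (r : WithTop ℝ) := Finset.min_le hmem
        rcases Finset.eq_empty_or_nonempty (TF.filter (fun s => t' < s)) with he | hne
        · have htop : ν t' = ⊤ := by
            show (TF.filter (fun s => t' < s)).min = ⊤
            rw [he]; exact Finset.min_empty
          rw [hveq, htop] at hle
          exact (WithTop.not_top_le_coe r) hle
        · obtain ⟨m, hm⟩ := Finset.min_of_nonempty hne
          have hmmem := Finset.mem_of_min hm
          have hrm : r < m := lt_trans h2 (Finset.mem_filter.1 hmmem).2
          have hνt' : ν t' = (m : WithTop ℝ) := hm
          rw [hveq, hνt'] at hle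
          rw [WithTop.coe_le_coe] at hle
          linarith
      · -- t' < r < t
        have hmem : r ∈ TF.filter (fun s => t' < s) := Finset.mem_filter.2 ⟨hrTF, h1⟩
        have hle : ν t' ≤ (r : WithTop ℝ) := Finset.min_le hmem
        rcases Finset.eq_empty_or_nonempty (TF.filter (fun s => t < s)) with he | hne
        · have htop : ν t = ⊤ := by
            show (TF.filter (fun s => t < s)).min = ⊤
            rw [he]; exact Finset.min_empty
          rw [← hveq, htop] at hle
          exact (WithTop.not_top_le_coe r) hle
        · obtain ⟨m, hm⟩ := Finset.min_of_nonempty hne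
          have hmmem := Finset.mem_of_min hm
          have hrm : r < m := lt_trans h2 (Finset.mem_filter.1 hmmem).2
          have hνt : ν t = (m : WithTop ℝ) := hm
          rw [← hveq, hνt] at hle
          rw [WithTop.coe_le_coe] at hle
          linarith
  -- the image of ν on D
  have himg : ν '' D = insert (⊤ : WithTop ℝ) ((fun r : ℝ => (r : WithTop ℝ)) '' T) := by
    apply Set.Subset.antisymm
    · rintro _ ⟨t, ht, rfl⟩
      rcases Finset.eq_empty_or_nonempty (TF.filter (fun r => t < r)) with he | hne
      · apply Set.mem_insert_iff.2
        exact Or.inl (by show (TF.filter (fun r => t < r)).min = ⊤; rw [he]; exact Finset.min_empty)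
      · apply Set.mem_insert_iff.2
        refine Or.inr ?_
        obtain ⟨m, hm⟩ := Finset.min_of_nonempty hne
        exact ⟨m, (hmemTF m).1 (Finset.mem_filter.1 (Finset.mem_of_min hm)).1,
          (show ν t = (m : WithTop ℝ) from hm).symm⟩
    · rintro y hy
      rcases Set.mem_insert_iff.1 hy with rfl | ⟨r, hrT, rfl⟩
      · -- ⊤ is attained
        rcases Finset.eq_empty_or_nonempty TF with he | hne
        · refine ⟨0, ?_, ?_⟩
          · intro i h0
            have : (0:ℝ) ∈ TF := (hmemTF 0).2 ⟨i, h0⟩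
            rw [he] at this
            simp at this
          · show (TF.filter (fun r => (0:ℝ) < r)).min = ⊤
            have hemp : TF.filter (fun r => (0:ℝ) < r) = ∅ := by
              rw [he]; rfl
            rw [hemp]; exact Finset.min_empty
        · refine ⟨TF.max' hne + 1, ?_, ?_⟩
          · intro i h0
            have hmem : TF.max' hne + 1 ∈ TF := (hmemTF _).2 ⟨i, h0⟩
            have := Finset.le_max' TF _ hmem
            linarith
          · show (TF.filter (fun r => TF.max' hne + 1 < r)).min = ⊤
            have hemp : TF.filter (fun r => TF.max' hne + 1 < r) = ∅ := by
              apply Finset.filter_eq_empty_iff.2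
              intro r hr
              have := Finset.le_max' TF r hr
              push_neg
              linarith
            rw [hemp]; exact Finset.min_empty
      · -- each root r gives the value r
        have hrTF : r ∈ TF := (hmemTF r).2 hrT
        rcases Finset.eq_empty_or_nonempty (TF.filter (fun s => s < r)) with he | hne
        · refine ⟨r - 1, ?_, ?_⟩
          · intro i h0
            have hmem : (r - 1 : ℝ) ∈ TF := (hmemTF _).2 ⟨i, h0⟩
            have : (r - 1 : ℝ) ∈ TF.filter (fun s => s < r) :=
              Finset.mem_filter.2 ⟨hmem, by linarith⟩
            rw [he] at this
            simp at this
          · show (TF.filter (fun s => r - 1 < s)).min = (r : WithTop ℝ)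
            apply le_antisymm
            · exact Finset.min_le (Finset.mem_filter.2 ⟨hrTF, by linarith⟩)
            · apply Finset.le_min
              intro s hs
              obtain ⟨hsTF, hts⟩ := Finset.mem_filter.1 hs
              rw [WithTop.coe_le_coe]
              by_contra hlt
              push_neg at hlt
              have : s ∈ TF.filter (fun s => s < r) := Finset.mem_filter.2 ⟨hsTF, hlt⟩
              rw [he] at this
              simp at this
        · set m := (TF.filter (fun s => s < r)).max' hne with hmdef
          have hmr : m < r := (Finset.mem_filter.1 (Finset.max'_mem _ hne)).2
          set t0 : ℝ := (m + r) / 2 with ht0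
          have hmt0 : m < t0 := by rw [ht0]; linarith
          have ht0r : t0 < r := by rw [ht0]; linarith
          refine ⟨t0, ?_, ?_⟩
          · intro i h0
            have hmem : t0 ∈ TF := (hmemTF _).2 ⟨i, h0⟩
            have : t0 ∈ TF.filter (fun s => s < r) := Finset.mem_filter.2 ⟨hmem, ht0r⟩
            have := Finset.le_max' _ t0 this
            linarith
          · show (TF.filter (fun s => t0 < s)).min = (r : WithTop ℝ)
            apply le_antisymm
            · exact Finset.min_le (Finset.mem_filter.2 ⟨hrTF, ht0r⟩)
            · apply Finset.le_min
              intro s hs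
              obtain ⟨hsTF, hts⟩ := Finset.mem_filter.1 hs
              rw [WithTop.coe_le_coe]
              by_contra hlt
              push_neg at hlt
              have : s ∈ TF.filter (fun s => s < r) := Finset.mem_filter.2 ⟨hsTF, hlt⟩
              have := Finset.le_max' _ s this
              linarith
  -- count
  rw [hach, ncard_image_eq_of_fiber_iff D sgn1 ν hfib, himg,
    Set.ncard_insert_of_notMem (by rintro ⟨r, _, hr⟩; exact WithTop.coe_ne_top hr)
      (hTfin.image _),
    Set.ncard_image_of_injective _ (WithTop.coe_injective)]

end OneD

/-- Deletion recursion for the number of regions of a line arrangement in the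
real plane: adding a new line `L` to the arrangement `𝒜` increases the number
of regions by `1` plus the number of points in which `L` meets the lines of `𝒜`. -/
theorem region_count_recursion_line_arrangement
    (𝒜 : Finset (Set (Fin 2 → ℝ))) (h𝒜 : ∀ H ∈ 𝒜, IsLine H)
    (L : Set (Fin 2 → ℝ)) (hL : IsLine L) (hLnot : L ∉ 𝒜) :
    (L ∩ ⋃ H ∈ 𝒜, H).Finite ∧
    Nat.card (ConnectedComponents {z : Fin 2 → ℝ | z ∉ L ∧ ∀ H ∈ 𝒜, z ∉ H}) =
      Nat.card (ConnectedComponents {z : Fin 2 → ℝ | ∀ H ∈ 𝒜, z ∉ H})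
        + 1 + (L ∩ ⋃ H ∈ 𝒜, H).ncard := by
  classical
  obtain ⟨nL, cL, hnL, hLiff⟩ := line_repr hL
  obtain ⟨x, v, hv, hLeq⟩ := hL
  letI ι : Type := {H : Set (Fin 2 → ℝ) // H ∈ 𝒜}
  letI : Fintype ι := FinsetCoe.fintype 𝒜
  choose n c hn hiff using fun i : ι => line_repr (h𝒜 i.1 i.2)
  set a : ι → ℝ := fun i => dotL (n i) v with ha
  set bb : ι → ℝ := fun i => dotL (n i) x - c i with hbb
  have hkey : ∀ (i : ι) (t : ℝ), dotL (n i) (x + t • v) - c i = a i * t + bb i := by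
    intro i t
    rw [dotL_add, dotL_smul, ha, hbb]
    ring
  have hab : ∀ i, a i ≠ 0 ∨ bb i ≠ 0 := by
    intro i
    by_contra h
    push_neg at h
    obtain ⟨h1, h2⟩ := h
    have hsub : L ⊆ i.1 := by
      intro z hz
      rw [hLeq] at hz
      obtain ⟨t, rfl⟩ := hz
      rw [hiff i]
      have hk := hkey i t
      rw [h1, h2] at hk
      simp at hk
      linarith [hk]
    have hLe : L = i.1 := line_subset_eq ⟨x, v, hv, hLeq⟩ (h𝒜 i.1 i.2) hsub
    exact hLnot (hLe ▸ i.2)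
  -- identify the region sets
  have hS1 : {z : Fin 2 → ℝ | ∀ H ∈ 𝒜, z ∉ H} = SA n c := by
    ext z
    simp only [mem_setOf_eq, SA]
    constructor
    · intro h i
      rw [sub_ne_zero]
      intro he
      exact h i.1 i.2 ((hiff i z).2 he)
    · intro h H hH hzH
      exact (h ⟨H, hH⟩) (sub_eq_zero.2 ((hiff ⟨H, hH⟩ z).1 hzH))
  have hS2 : {z : Fin 2 → ℝ | z ∉ L ∧ ∀ H ∈ 𝒜, z ∉ H}
      = SA (fun o : Option ι => o.elim nL n) (fun o : Option ι => o.elim cL c) := by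
    ext z
    simp only [mem_setOf_eq, SA]
    constructor
    · rintro ⟨hzL, hz⟩ o
      cases o with
      | none =>
        simp only [Option.elim]
        rw [sub_ne_zero]
        intro he
        exact hzL ((hLiff z).2 he)
      | some i =>
        simp only [Option.elim]
        rw [sub_ne_zero]
        intro he
        exact hz i.1 i.2 ((hiff i z).2 he)
    · intro h
      constructor
      · intro hzL
        exact (h none) (sub_eq_zero.2 ((hLiff z).1 hzL))
      · intro H hH hzH
        exact (h (some ⟨H, hH⟩)) (sub_eq_zero.2 ((hiff ⟨H, hH⟩ z).1 hzH))
  have cc_congr : ∀ (S1 S2 : Set (Fin 2 → ℝ)), S1 = S2 →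
      Nat.card (ConnectedComponents S1) = Nat.card (ConnectedComponents S2) := by
    intro S1 S2 h
    rw [h]
  -- the L-meeting cells equal 1-D achievable sign vectors
  have hM : {σ ∈ AchA n c | ∃ p ∈ cellA n c σ, dotL nL p - cL = 0}
      = {σ : ι → Bool | ∃ t : ℝ, (∀ i, a i * t + bb i ≠ 0) ∧
          (fun i => decide (0 < a i * t + bb i)) = σ} := by
    ext σ
    constructor
    · rintro ⟨⟨z, hz, rfl⟩, p, hp, hp0⟩
      have hpS : p ∈ SA n c := cellA_subset _ hp
      have hpL : p ∈ L := (hLiff p).2 (by linarith [hp0])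
      rw [hLeq] at hpL
      obtain ⟨t, rfl⟩ := hpL
      refine ⟨t, fun i => by rw [← hkey i t]; exact hpS i, ?_⟩
      have hsgn : sgnA n c (x + t • v) = sgnA n c z := (mem_cellA_iff hpS _).1 hp
      rw [← hsgn]
      funext i
      simp only [sgnA]
      rw [hkey i t]
    · rintro ⟨t, hti, rfl⟩
      have hpS : x + t • v ∈ SA n c := by
        intro i
        rw [hkey i t]
        exact hti i
      have hsgneq : sgnA n c (x + t • v) = (fun i => decide (0 < a i * t + bb i)) := by
        funext i
        simp only [sgnA]
        rw [hkey i t]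
      refine ⟨⟨x + t • v, hpS, hsgneq⟩, x + t • v, (mem_cellA_iff hpS _).2 hsgneq, ?_⟩
      have hmem : x + t • v ∈ L := by rw [hLeq]; exact ⟨t, rfl⟩
      have := (hLiff _).1 hmem
      linarith
  -- the intersection points
  have hT : L ∩ ⋃ H ∈ 𝒜, H = (fun t : ℝ => x + t • v) '' {t : ℝ | ∃ i : ι, a i * t + bb i = 0} := by
    ext p
    constructor
    · rintro ⟨hpL, hpU⟩
      rw [hLeq] at hpL
      obtain ⟨t, rfl⟩ := hpL
      rw [Set.mem_iUnion₂] at hpU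
      obtain ⟨H, hH, hpH⟩ := hpU
      refine ⟨t, ⟨⟨H, hH⟩, ?_⟩, rfl⟩
      rw [← hkey ⟨H, hH⟩ t, sub_eq_zero]
      exact (hiff ⟨H, hH⟩ _).1 hpH
    · rintro ⟨t, ⟨i, hit⟩, rfl⟩
      refine ⟨by rw [hLeq]; exact ⟨t, rfl⟩, ?_⟩
      rw [Set.mem_iUnion₂]
      refine ⟨i.1, i.2, ?_⟩
      rw [hiff i, ← sub_eq_zero, hkey i t]
      exact hit
  have hinj : Function.Injective (fun t : ℝ => x + t • v) := by
    intro s t h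
    simp only at h
    obtain ⟨j, hj⟩ : ∃ j, v j ≠ 0 := by
      by_contra hc
      push_neg at hc
      exact hv (funext fun j => hc j)
    have hcf := congrFun h j
    simp only [Pi.add_apply, Pi.smul_apply, smul_eq_mul] at hcf
    exact mul_right_cancel₀ hj (by linarith)
  obtain ⟨hTfin, h1d⟩ := oneD_count a bb hab
  constructor
  · rw [hT]
    exact hTfin.image _
  · rw [cc_congr _ _ hS2, cc_congr _ _ hS1, card_components_eq, card_components_eq,
      AchA_option_ncard n c nL cL hnL, hM, h1d, hT,
      Set.ncard_image_of_injective _ hinj]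
    omega
end LineArr
end

section
/- Let 𝒜 be a finite set of affine hyperplanes in ℝ^ℓ and let H ∈ 𝒜. Then the number of connected components of ℝ^ℓ \ ⋃_{K ∈ 𝒜} K equals the number of connected components of ℝ^ℓ \ ⋃_{K ∈ 𝒜 \ {H}} K plus the number of connected components of H \ ⋃_{K ∈ 𝒜 \ {H}} K (the latter with the subspace topology on H). -/
/-- An affine hyperplane in `𝕜^ℓ`: the level set of a nonzero linear functional. -/
def IsAffineHyperplane {𝕜 : Type*} [Field 𝕜] {ℓ : ℕ} (H : Set (Fin ℓ → 𝕜)) : Prop :=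
  ∃ f : (Fin ℓ → 𝕜) →ₗ[𝕜] 𝕜, f ≠ 0 ∧ ∃ c : 𝕜, H = {z | f z = c}

/-!
Off the hyperplanes `𝒜 \ {H}` the sign vector of a point (on which side of each hyperplane it
lies) is locally constant, and its fibres, the chambers, are convex. Hence the regions cut out
of a convex set are in bijection with the sign vectors realized in it. Let `R⁺`, `R⁻` be the sign
vectors realized on the two open sides of `H`. The regions of `𝒜` are counted by `|R⁺| + |R⁻|`.
Since chambers are open, a sign vector realized on `H` is realized on both sides of it, so
`R⁺ ∪ R⁻` is the set of all realized sign vectors; since chambers are convex, one realized on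
both sides is realized on `H`, so `R⁺ ∩ R⁻` is the set realized on `H`. Inclusion–exclusion
`|R⁺| + |R⁻| = |R⁺ ∪ R⁻| + |R⁺ ∩ R⁻|` is the recursion.
-/

open Set Topology

theorem IsAffineHyperplane.exists_continuousLinearMap {𝕜 : Type*} [NontriviallyNormedField 𝕜]
    [CompleteSpace 𝕜] {ℓ : ℕ} {K : Set (Fin ℓ → 𝕜)} (hK : IsAffineHyperplane K) :
    ∃ f : (Fin ℓ → 𝕜) →L[𝕜] 𝕜, f ≠ 0 ∧ ∃ c, K = {z | f z = c} := by
  obtain ⟨f, hf, c, rfl⟩ := hK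
  exact ⟨LinearMap.toContinuousLinearMap f,
    LinearMap.toContinuousLinearMap.map_ne_zero_iff.2 hf, c, rfl⟩

theorem card_connectedComponents_eq_ncard_range {X β : Type*} [TopologicalSpace X]
    [TopologicalSpace β] [DiscreteTopology β] {g : X → β} (hg : Continuous g)
    (hfiber : ∀ b, IsPreconnected (g ⁻¹' {b})) :
    Nat.card (ConnectedComponents X) = (range g).ncard := by
  have hinj : Function.Injective hg.connectedComponentsLift := by
    refine ConnectedComponents.surjective_coe.forall₂.2 fun x y hxy => ?_
    rw [hg.connectedComponentsLift_apply_coe, hg.connectedComponentsLift_apply_coe] at hxy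
    exact ConnectedComponents.coe_eq_coe.2 <| connectedComponent_eq <|
      (hfiber (g x)).subset_connectedComponent rfl hxy.symm
  rw [← Nat.card_coe_set_eq, ← Nat.card_range_of_injective hinj,
    ← ConnectedComponents.surjective_coe.range_comp, hg.connectedComponentsLift_comp_coe]

theorem card_connectedComponents_eq_ncard_image_of_convex_fiber {E β : Type*} [AddCommGroup E]
    [Module ℝ E] [TopologicalSpace E] [ContinuousAdd E] [ContinuousSMul ℝ E] [TopologicalSpace β]
    [DiscreteTopology β] {X : Set E} {g : E → β} (hg : ContinuousOn g X)
    (hfiber : ∀ b, Convex ℝ (X ∩ g ⁻¹' {b})) :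
    Nat.card (ConnectedComponents X) = (g '' X).ncard := by
  rw [← range_domRestrict]
  refine card_connectedComponents_eq_ncard_range
    (continuousOn_iff_continuous_domRestrict.1 hg) fun b => ?_
  rw [← Topology.IsInducing.subtypeVal.isPreconnected_image]
  exact (Subtype.image_preimage_coe X _ ▸ hfiber b).isPreconnected

theorem continuousAt_decide_lt {X : Type*} [TopologicalSpace X] {f : X → ℝ} {c : ℝ} {z : X}
    (hf : ContinuousAt f z) (hz : f z ≠ c) : ContinuousAt (fun x => decide (c < f x)) z := by
  rcases hz.lt_or_gt with hlt | hgt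
  · exact (continuousAt_const (y := false)).congr <|
      (hf.eventually (gt_mem_nhds hlt)).mono fun x hx => by simp [hx.not_gt]
  · exact (continuousAt_const (y := true)).congr <|
      (hf.eventually (lt_mem_nhds hgt)).mono fun x hx => by simp [hx]

section Arrangement

variable {E ι : Type*} [AddCommGroup E] [Module ℝ E] [TopologicalSpace E]

def openHalfSpace (f : E →L[ℝ] ℝ) (c : ℝ) : Bool → Set E
  | true => {z | c < f z}
  | false => {z | f z < c}

theorem mem_openHalfSpace {f : E →L[ℝ] ℝ} {c : ℝ} {b : Bool} {z : E} :
    z ∈ openHalfSpace f c b ↔ f z ≠ c ∧ decide (c < f z) = b := by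
  cases b
  · simp only [openHalfSpace, mem_ofPred_eq, decide_eq_false_iff_not, not_lt]
    exact ⟨fun h => ⟨h.ne, h.le⟩, fun h => h.2.lt_of_ne h.1⟩
  · simp only [openHalfSpace, mem_ofPred_eq, decide_eq_true_eq]
    exact ⟨fun h => ⟨h.ne', h⟩, And.right⟩

theorem isOpen_openHalfSpace (f : E →L[ℝ] ℝ) (c : ℝ) (b : Bool) :
    IsOpen (openHalfSpace f c b) := by
  cases b
  exacts [isOpen_lt f.continuous continuous_const, isOpen_lt continuous_const f.continuous]

theorem convex_openHalfSpace (f : E →L[ℝ] ℝ) (c : ℝ) (b : Bool) :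
    Convex ℝ (openHalfSpace f c b) := by
  cases b
  exacts [(convex_Iio c).linear_preimage f.toLinearMap,
    (convex_Ioi c).linear_preimage f.toLinearMap]

variable (φ : ι → E →L[ℝ] ℝ) (c : ι → ℝ)

noncomputable def signVector (z : E) : ι → Bool := fun i => decide (c i < φ i z)

def arrangementComplement : Set E := {z | ∀ i, φ i z ≠ c i}

def chamber (τ : ι → Bool) : Set E := ⋂ i, openHalfSpace (φ i) (c i) (τ i)

def realizedSignVectors (S : Set E) : Set (ι → Bool) :=
  signVector φ c '' (S ∩ arrangementComplement φ c)

theorem arrangementComplement_inter_preimage_signVector (τ : ι → Bool) :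
    arrangementComplement φ c ∩ signVector φ c ⁻¹' {τ} = chamber φ c τ := by
  ext z
  simp [arrangementComplement, signVector, chamber, mem_openHalfSpace, funext_iff, forall_and]

theorem mem_realizedSignVectors {S : Set E} {τ : ι → Bool} :
    τ ∈ realizedSignVectors φ c S ↔ (S ∩ chamber φ c τ).Nonempty := by
  simp only [realizedSignVectors, ← arrangementComplement_inter_preimage_signVector, ← inter_assoc]
  rfl

theorem convex_chamber (τ : ι → Bool) : Convex ℝ (chamber φ c τ) :=
  convex_iInter fun _ => convex_openHalfSpace _ _ _

theorem isOpen_chamber [Finite ι] (τ : ι → Bool) : IsOpen (chamber φ c τ) :=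
  isOpen_iInter_of_finite fun _ => isOpen_openHalfSpace _ _ _

theorem continuousOn_signVector :
    ContinuousOn (signVector φ c) (arrangementComplement φ c) := fun _ hz =>
  (continuousAt_pi.2 fun i =>
    continuousAt_decide_lt (φ i).continuous.continuousAt (hz i)).continuousWithinAt

variable [ContinuousAdd E] [ContinuousSMul ℝ E]

theorem IsOpen.openHalfSpace_inter_nonempty {f : E →L[ℝ] ℝ} (hf : f ≠ 0) {U : Set E}
    (hU : IsOpen U) {z : E} (hz : z ∈ U) (b : Bool) :
    (openHalfSpace f (f z) b ∩ U).Nonempty := by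
  have hV : f '' U ∈ 𝓝 (f z) := (f.isOpenMap_of_ne_zero hf).image_mem_nhds (hU.mem_nhds hz)
  cases b
  · obtain ⟨_, hlt, y, hy, rfl⟩ := Filter.nonempty_of_mem (inter_mem_nhdsWithin (Iio (f z)) hV)
    exact ⟨y, hlt, hy⟩
  · obtain ⟨_, hlt, y, hy, rfl⟩ := Filter.nonempty_of_mem (inter_mem_nhdsWithin (Ioi (f z)) hV)
    exact ⟨y, hlt, hy⟩

theorem Convex.hyperplane_inter_nonempty {C : Set E} (hC : Convex ℝ C) (f : E →L[ℝ] ℝ) {c₀ : ℝ}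
    (hpos : (openHalfSpace f c₀ true ∩ C).Nonempty)
    (hneg : (openHalfSpace f c₀ false ∩ C).Nonempty) : ({z | f z = c₀} ∩ C).Nonempty := by
  obtain ⟨p, hp, hpC⟩ := hpos
  obtain ⟨q, hq, hqC⟩ := hneg
  obtain ⟨z, hzC, hz⟩ := hC.isPreconnected.intermediate_value hqC hpC f.continuous.continuousOn
    ⟨le_of_lt hq, le_of_lt hp⟩
  exact ⟨z, hz, hzC⟩

variable [Finite ι]

theorem card_connectedComponents_inter_arrangementComplement {S : Set E} (hS : Convex ℝ S) :
    Nat.card (ConnectedComponents ↥(S ∩ arrangementComplement φ c)) =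
      (realizedSignVectors φ c S).ncard := by
  refine card_connectedComponents_eq_ncard_image_of_convex_fiber
    ((continuousOn_signVector φ c).mono inter_subset_right) fun τ => ?_
  rw [inter_assoc, arrangementComplement_inter_preimage_signVector]
  exact hS.inter (convex_chamber φ c τ)

theorem card_connectedComponents_hyperplane_compl_inter (f : E →L[ℝ] ℝ) (c₀ : ℝ) :
    Nat.card (ConnectedComponents ↥({z | f z = c₀}ᶜ ∩ arrangementComplement φ c)) =
      (realizedSignVectors φ c (openHalfSpace f c₀ true)).ncard +
        (realizedSignVectors φ c (openHalfSpace f c₀ false)).ncard := by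
  set g : E → Bool × (ι → Bool) := fun z => (decide (c₀ < f z), signVector φ c z)
  have hg : ContinuousOn g ({z | f z = c₀}ᶜ ∩ arrangementComplement φ c) :=
    ContinuousOn.prodMk (fun z hz =>
      (continuousAt_decide_lt f.continuous.continuousAt hz.1).continuousWithinAt)
      ((continuousOn_signVector φ c).mono inter_subset_right)
  have hfiber : ∀ p : Bool × (ι → Bool), {z | f z = c₀}ᶜ ∩ arrangementComplement φ c ∩ g ⁻¹' {p}
      = openHalfSpace f c₀ p.1 ∩ chamber φ c p.2 := by
    rintro ⟨b, τ⟩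
    rw [← arrangementComplement_inter_preimage_signVector]
    ext z
    simp [g, mem_openHalfSpace, and_assoc, and_left_comm]
  have himage : g '' ({z | f z = c₀}ᶜ ∩ arrangementComplement φ c) =
      Prod.mk true '' realizedSignVectors φ c (openHalfSpace f c₀ true) ∪
        Prod.mk false '' realizedSignVectors φ c (openHalfSpace f c₀ false) := by
    ext ⟨b, τ⟩
    cases b <;> simp [g, realizedSignVectors, mem_openHalfSpace, and_assoc, and_left_comm]
  rw [card_connectedComponents_eq_ncard_image_of_convex_fiber hg fun p =>
      hfiber p ▸ (convex_openHalfSpace f c₀ p.1).inter (convex_chamber φ c p.2), himage,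
    ncard_union_eq (by simp [disjoint_left]),
    ncard_image_of_injective _ (Prod.mk_right_injective _),
    ncard_image_of_injective _ (Prod.mk_right_injective _)]

theorem realizedSignVectors_openHalfSpace_union {f : E →L[ℝ] ℝ} (hf : f ≠ 0) (c₀ : ℝ) :
    realizedSignVectors φ c (openHalfSpace f c₀ true) ∪
      realizedSignVectors φ c (openHalfSpace f c₀ false) = realizedSignVectors φ c univ := by
  ext τ
  simp only [mem_union, mem_realizedSignVectors, univ_inter]
  refine ⟨?_, fun ⟨z, hz⟩ => ?_⟩
  · rintro (⟨z, -, hz⟩ | ⟨z, -, hz⟩) <;> exact ⟨z, hz⟩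
  · rcases lt_trichotomy (f z) c₀ with hlt | rfl | hgt
    · exact Or.inr ⟨z, hlt, hz⟩
    · exact Or.inl ((isOpen_chamber φ c τ).openHalfSpace_inter_nonempty hf hz true)
    · exact Or.inl ⟨z, hgt, hz⟩

theorem realizedSignVectors_openHalfSpace_inter {f : E →L[ℝ] ℝ} (hf : f ≠ 0) (c₀ : ℝ) :
    realizedSignVectors φ c (openHalfSpace f c₀ true) ∩
      realizedSignVectors φ c (openHalfSpace f c₀ false) =
        realizedSignVectors φ c {z | f z = c₀} := by
  ext τ
  simp only [mem_inter_iff, mem_realizedSignVectors]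
  refine ⟨fun ⟨hpos, hneg⟩ => (convex_chamber φ c τ).hyperplane_inter_nonempty f hpos hneg,
    fun ⟨z, hz, hzτ⟩ => ?_⟩
  subst hz
  exact ⟨(isOpen_chamber φ c τ).openHalfSpace_inter_nonempty hf hzτ true,
    (isOpen_chamber φ c τ).openHalfSpace_inter_nonempty hf hzτ false⟩

theorem card_connectedComponents_deletion_restriction
    {f : E →L[ℝ] ℝ} (hf : f ≠ 0) {H : Set E} {c₀ : ℝ} (hH : H = {z | f z = c₀}) :
    Nat.card (ConnectedComponents ↥(Hᶜ ∩ arrangementComplement φ c)) =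
      Nat.card (ConnectedComponents ↥(arrangementComplement φ c)) +
        Nat.card (ConnectedComponents ↥(H ∩ arrangementComplement φ c)) := by
  subst hH
  have hdel := card_connectedComponents_inter_arrangementComplement φ c (convex_univ (𝕜 := ℝ))
  rw [univ_inter] at hdel
  rw [card_connectedComponents_hyperplane_compl_inter, hdel,
    card_connectedComponents_inter_arrangementComplement φ c
      (show Convex ℝ {z | f z = c₀} from (convex_singleton c₀).linear_preimage f.toLinearMap),
    ← realizedSignVectors_openHalfSpace_union φ c hf c₀,
    ← realizedSignVectors_openHalfSpace_inter φ c hf c₀, ncard_union_add_ncard_inter]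

end Arrangement

/-- Deletion–restriction recursion for the number of regions of a real
hyperplane arrangement: the number of regions of `𝒜` equals the number of
regions of the deleted arrangement `𝒜 \ {H}` plus the number of regions of the
restriction of `𝒜 \ {H}` to `H`. -/
theorem deletion_restriction_region_count
    (ℓ : ℕ) (𝒜 : Finset (Set (Fin ℓ → ℝ)))
    (h𝒜 : ∀ K ∈ 𝒜, IsAffineHyperplane K)
    (H : Set (Fin ℓ → ℝ)) (hH : H ∈ 𝒜) :
    Nat.card (ConnectedComponents {z : Fin ℓ → ℝ | ∀ K ∈ 𝒜, z ∉ K}) =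
      Nat.card (ConnectedComponents {z : Fin ℓ → ℝ | ∀ K ∈ 𝒜, K ≠ H → z ∉ K})
        + Nat.card (ConnectedComponents
            {z : Fin ℓ → ℝ | z ∈ H ∧ ∀ K ∈ 𝒜, K ≠ H → z ∉ K}) := by
  choose! f hf c hfc using fun K hK => (h𝒜 K hK).exists_continuousLinearMap
  set D := {z : Fin ℓ → ℝ | ∀ K ∈ 𝒜, K ≠ H → z ∉ K}
  have hfull : {z : Fin ℓ → ℝ | ∀ K ∈ 𝒜, z ∉ K} = Hᶜ ∩ D := by
    ext z
    refine ⟨fun h => ⟨h H hH, fun K hK _ => h K hK⟩, fun ⟨hzH, h⟩ K hK => ?_⟩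
    rcases eq_or_ne K H with rfl | hKH
    exacts [hzH, h K hK hKH]
  have hdel : D = arrangementComplement (fun K : 𝒜.erase H => f K) (fun K => c K) := by
    have hmem : ∀ K ∈ 𝒜, ∀ z, z ∈ K ↔ f K z = c K := fun K hK => Set.ext_iff.1 (hfc K hK)
    ext z
    simp +contextual only [D, arrangementComplement, mem_ofPred_eq, Subtype.forall,
      Finset.mem_erase, hmem, ne_eq, and_imp]
    exact forall_congr' fun _ => imp.swap
  change _ = _ + Nat.card (ConnectedComponents ↥(H ∩ D))
  rw [hfull, hdel]
  exact card_connectedComponents_deletion_restriction _ _ (hf H hH) (hfc H hH)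
end

section
/- Define q₁, q₂, q₃ : ℂ³ → ℂ by q₁(x,y,z) = x² − y², q₂(x,y,z) = y² − z², q₃(x,y,z) = z² − x². Let (α, β, γ) ∈ ℂ³ with (α, β, γ) ≠ (0,0,0) and α + β + γ = 0, and let p ∈ ℂ³ be a point with q₁(p)·q₂(p)·q₃(p) ≠ 0. Then the ℂ-linear map α·q₂(p)q₃(p)·Dq₁(p) + β·q₁(p)q₃(p)·Dq₂(p) + γ·q₁(p)q₂(p)·Dq₃(p) : ℂ³ → ℂ (where Dqᵢ(p) denotes the Fréchet derivative of qᵢ at p) is the zero map if and only if there exists λ ∈ ℂ with (q₁(p), q₂(p), q₃(p)) = (λα, λβ, λγ). -/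
noncomputable def pr (i : Fin 3) : (Fin 3 → ℂ) →L[ℂ] ℂ := ContinuousLinearMap.proj i

lemma dsq (p : Fin 3 → ℂ) (i : Fin 3) :
    HasFDerivAt (fun v : Fin 3 → ℂ => v i ^ 2) ((2 * p i) • pr i) p := by
  have h := ((pr i).hasFDerivAt (x := p)).mul ((pr i).hasFDerivAt (x := p))
  have e : (2 * p i) • pr i = p i • pr i + p i • pr i := by
    ext v; simp [pr, two_mul, add_mul]
  have h' : (fun v : Fin 3 → ℂ => v i ^ 2) = fun v => pr i v * pr i v := by
    funext v; simp [pr, sq]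
  rw [e, h']; exact h

lemma dq (p : Fin 3 → ℂ) (i j : Fin 3) :
    HasFDerivAt (fun v : Fin 3 → ℂ => v i ^ 2 - v j ^ 2)
      ((2 * p i) • pr i - (2 * p j) • pr j) p := (dsq p i).sub (dsq p j)

/-- Critical points of the master function of the braid arrangement `𝒜₃`:
for weights `α + β + γ = 0`, the (cleared-denominator) logarithmic differential
`α q₂q₃ dq₁ + β q₁q₃ dq₂ + γ q₁q₂ dq₃` vanishes at a point `p` of the complement
if and only if `[q₁(p) : q₂(p) : q₃(p)] = [α : β : γ]`. -/
theorem critical_locus_braid_master_function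
    (q₁ q₂ q₃ : (Fin 3 → ℂ) → ℂ)
    (hq₁ : q₁ = fun v => v 0 ^ 2 - v 1 ^ 2)
    (hq₂ : q₂ = fun v => v 1 ^ 2 - v 2 ^ 2)
    (hq₃ : q₃ = fun v => v 2 ^ 2 - v 0 ^ 2)
    (α β γ : ℂ) (hne : (α, β, γ) ≠ (0, 0, 0)) (hsum : α + β + γ = 0)
    (p : Fin 3 → ℂ) (hp : q₁ p * q₂ p * q₃ p ≠ 0) :
    (α * (q₂ p * q₃ p)) • fderiv ℂ q₁ p + (β * (q₁ p * q₃ p)) • fderiv ℂ q₂ p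
        + (γ * (q₁ p * q₂ p)) • fderiv ℂ q₃ p = 0
      ↔ ∃ lam : ℂ, q₁ p = lam * α ∧ q₂ p = lam * β ∧ q₃ p = lam * γ := by
  subst hq₁ hq₂ hq₃
  rw [(dq p 0 1).fderiv, (dq p 1 2).fderiv, (dq p 2 0).fderiv]
  have hp' : (p 0 ^ 2 - p 1 ^ 2) * (p 1 ^ 2 - p 2 ^ 2) * (p 2 ^ 2 - p 0 ^ 2) ≠ 0 := hp
  set Q₁ : ℂ := p 0 ^ 2 - p 1 ^ 2 with hQ₁
  set Q₂ : ℂ := p 1 ^ 2 - p 2 ^ 2 with hQ₂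
  set Q₃ : ℂ := p 2 ^ 2 - p 0 ^ 2 with hQ₃
  obtain ⟨⟨hq1, hq2⟩, hq3⟩ : (Q₁ ≠ 0 ∧ Q₂ ≠ 0) ∧ Q₃ ≠ 0 := by
    rw [← mul_ne_zero_iff, ← mul_ne_zero_iff]; exact hp'
  show (α * (Q₂ * Q₃)) • _ + (β * (Q₁ * Q₃)) • _ + (γ * (Q₁ * Q₂)) • _ = 0 ↔
    ∃ lam : ℂ, Q₁ = lam * α ∧ Q₂ = lam * β ∧ Q₃ = lam * γ
  constructor
  · intro h
    have e0 := ContinuousLinearMap.ext_iff.1 h (Pi.single 0 1)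
    have e1 := ContinuousLinearMap.ext_iff.1 h (Pi.single 1 1)
    have e2 := ContinuousLinearMap.ext_iff.1 h (Pi.single 2 1)
    simp [pr, Pi.single_apply] at e0 e1 e2
    set A : ℂ := α * (Q₂ * Q₃) with hA
    set B : ℂ := β * (Q₁ * Q₃) with hB
    set C : ℂ := γ * (Q₁ * Q₂) with hC
    have f0 : p 0 * (A - C) = 0 := by linear_combination e0 / 2
    have f1 : p 1 * (B - A) = 0 := by linear_combination e1 / 2
    have f2 : p 2 * (C - B) = 0 := by linear_combination e2 / 2
    obtain ⟨kAB, kBC⟩ : A = B ∧ B = C := by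
      by_cases h0 : p 0 = 0
      · have h1' : p 1 ≠ 0 := fun h => hq1 (by rw [hQ₁, h0, h]; ring)
        have h2' : p 2 ≠ 0 := fun h => hq3 (by rw [hQ₃, h0, h]; ring)
        have kBA := sub_eq_zero.1 ((mul_eq_zero.1 f1).resolve_left h1')
        have kCB := sub_eq_zero.1 ((mul_eq_zero.1 f2).resolve_left h2')
        exact ⟨kBA.symm, kCB.symm⟩
      · have kAC := sub_eq_zero.1 ((mul_eq_zero.1 f0).resolve_left h0)
        by_cases h1 : p 1 = 0
        · have h2' : p 2 ≠ 0 := fun h => hq2 (by rw [hQ₂, h1, h]; ring)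
          have kCB := sub_eq_zero.1 ((mul_eq_zero.1 f2).resolve_left h2')
          exact ⟨kAC.trans kCB, kCB.symm⟩
        · have kBA := sub_eq_zero.1 ((mul_eq_zero.1 f1).resolve_left h1)
          exact ⟨kBA.symm, kBA.trans kAC⟩
    -- cancel common factors
    have c1 : α * Q₂ = β * Q₁ := by
      have : α * Q₂ * Q₃ = β * Q₁ * Q₃ := by rw [hA, hB] at kAB; linear_combination kAB
      exact mul_right_cancel₀ hq3 this
    have c2 : β * Q₃ = γ * Q₂ := by
      have : Q₁ * (β * Q₃) = Q₁ * (γ * Q₂) := by rw [hB, hC] at kBC; linear_combination kBC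
      exact mul_left_cancel₀ hq1 this
    have c3 : α * Q₃ = γ * Q₁ := by
      have : Q₂ * (α * Q₃) = Q₂ * (γ * Q₁) := by
        have kAC := kAB.trans kBC
        rw [hA, hC] at kAC; linear_combination kAC
      exact mul_left_cancel₀ hq2 this
    by_cases hα : α = 0
    · exfalso
      have hβ : β = 0 := by
        have : β * Q₁ = 0 := by rw [← c1, hα]; ring
        exact (mul_eq_zero.1 this).resolve_right hq1
      have hγ : γ = 0 := by
        have : γ * Q₁ = 0 := by rw [← c3, hα]; ring
        exact (mul_eq_zero.1 this).resolve_right hq1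
      exact hne (by rw [hα, hβ, hγ])
    · refine ⟨Q₁ / α, (div_mul_cancel₀ Q₁ hα).symm, ?_, ?_⟩
      · rw [div_mul_eq_mul_div, eq_div_iff hα]; linear_combination c1
      · rw [div_mul_eq_mul_div, eq_div_iff hα]; linear_combination c3
  · rintro ⟨lam, h1, h2, h3⟩
    have hh1 : Q₁ = lam * α := h1
    have hh2 : Q₂ = lam * β := h2
    have hh3 : Q₃ = lam * γ := h3
    ext v
    simp only [ContinuousLinearMap.add_apply, ContinuousLinearMap.smul_apply,
      ContinuousLinearMap.sub_apply, ContinuousLinearMap.zero_apply, pr,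
      ContinuousLinearMap.proj_apply, smul_eq_mul]
    rw [hh1, hh2, hh3]; ring
end
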